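/- The function x ↦ x^α with α = log 2 / log 3 is a modulus of continuity for the Cantor function c on [0,1] that dominates c pointwise: c(x) ≤ x^α and |c(x)−c(y)| ≤ |x−y|^α for all x, y ∈ [0,1]. Moreover x^α is absolutely continuous on [0,1]. -/

import Mathlib

noncomputable def modCont (f : ℝ → ℝ) (a b : ℝ) (δ : ℝ) : ℝ :=
  sSup {d : ℝ | ∃ x ∈ Set.Icc a b, ∃ y ∈ Set.Icc a b, |x - y| ≤ δ ∧ d = |f x - f y|}

def AbsolutelyContinuousOn (g : ℝ → ℝ) (a b : ℝ) : Prop :=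
  ∀ ε > (0:ℝ), ∃ δ > (0:ℝ), ∀ n : ℕ, ∀ x y : ℕ → ℝ,
    (∀ i < n, a ≤ x i ∧ x i ≤ y i ∧ y i ≤ b) →
    (∀ i < n, ∀ j < n, i ≠ j → Disjoint (Set.Ioo (x i) (y i)) (Set.Ioo (x j) (y j))) →
    (∑ i ∈ Finset.range n, (y i - x i)) < δ →
    (∑ i ∈ Finset.range n, |g (y i) - g (x i)|) < ε

/-- The standard Cantor function is the unique monotone function on `[0,1]` with
`c 0 = 0`, `c 1 = 1`, satisfying the self-similarity relations
`c (x/3) = c x / 2` and `c ((x+2)/3) = (1 + c x)/2`. -/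
def IsCantorFunction (c : ℝ → ℝ) : Prop :=
  MonotoneOn c (Set.Icc 0 1) ∧ c 0 = 0 ∧ c 1 = 1 ∧
  (∀ x ∈ Set.Icc (0:ℝ) 1, c (x / 3) = c x / 2) ∧
  (∀ x ∈ Set.Icc (0:ℝ) 1, c ((x + 2) / 3) = (1 + c x) / 2)

noncomputable def cantorAlpha : ℝ := Real.log 2 / Real.log 3

/-! ### Auxiliary lemmas -/

lemma cA_pos : 0 < cantorAlpha :=
  div_pos (Real.log_pos (by norm_num)) (Real.log_pos (by norm_num))

lemma cA_lt_one : cantorAlpha < 1 :=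
  (div_lt_one (Real.log_pos (by norm_num))).2
    (Real.log_lt_log (by norm_num) (by norm_num))

lemma three_rpow : (3:ℝ) ^ cantorAlpha = 2 := by
  have : cantorAlpha = Real.logb 3 2 := rfl
  rw [this, Real.rpow_logb (by norm_num) (by norm_num) (by norm_num)]

lemma third_rpow : ((1:ℝ)/3) ^ cantorAlpha = 1/2 := by
  rw [Real.div_rpow (by norm_num) (by norm_num), Real.one_rpow, three_rpow]

lemma scale_rpow {t : ℝ} (ht : 0 ≤ t) : (3*t) ^ cantorAlpha = 2 * t ^ cantorAlpha := by
  rw [Real.mul_rpow (by norm_num) ht, three_rpow]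

lemma key_ineq {t : ℝ} (ht : t ∈ Set.Icc (0:ℝ) 1) :
    1 + t ^ cantorAlpha ≤ (t+2) ^ cantorAlpha := by
  obtain ⟨h0, h1⟩ := ht
  rcases eq_or_lt_of_le h1 with rfl | h1
  · rw [Real.one_rpow, show (1:ℝ)+2 = 3 by norm_num, three_rpow]; norm_num
  · have hcc := Real.concaveOn_rpow cA_pos.le cA_lt_one.le
    set l : ℝ := 2 / (3 - t) with hl
    have h3t : (0:ℝ) < 3 - t := by linarith
    have hl0 : 0 ≤ l := by positivity
    have hl1 : l ≤ 1 := by rw [hl, div_le_one h3t]; linarith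
    have hl3 : l * (3 - t) = 2 := by rw [hl]; exact div_mul_cancel₀ _ h3t.ne'
    have e1 : l • t + (1-l) • (3:ℝ) = 1 := by
      field_simp [hl]; linear_combination (-1:ℝ) * hl3
    have e2 : (1-l) • t + l • (3:ℝ) = t + 2 := by
      field_simp [hl]; linear_combination hl3
    have A := hcc.2 (Set.mem_Ici.2 h0)
      (Set.mem_Ici.2 (by norm_num : (0:ℝ) ≤ 3)) hl0 (by linarith : (0:ℝ) ≤ 1-l)
      (show l + (1-l) = 1 by ring)
    have B := hcc.2 (Set.mem_Ici.2 h0)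
      (Set.mem_Ici.2 (by norm_num : (0:ℝ) ≤ 3)) (by linarith : (0:ℝ) ≤ 1-l) hl0
      (show (1-l) + l = 1 by ring)
    rw [e1] at A
    rw [e2] at B
    simp only [smul_eq_mul, Real.one_rpow] at A B
    have h3 : (3:ℝ) ^ cantorAlpha = 2 := three_rpow
    nlinarith [A, B]

lemma holder_aux {c : ℝ → ℝ} (hc : IsCantorFunction c) :
    ∀ n : ℕ, ∀ x ∈ Set.Icc (0:ℝ) 1, ∀ y ∈ Set.Icc (0:ℝ) 1, y ≤ x →
      c x - c y ≤ (x - y) ^ cantorAlpha + (1/2) ^ n := by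
  obtain ⟨hmono, h0, h1, hA, hB⟩ := hc
  have hbound : ∀ x ∈ Set.Icc (0:ℝ) 1, 0 ≤ c x ∧ c x ≤ 1 := by
    intro x hx
    constructor
    · rw [← h0]; exact hmono (by norm_num) hx hx.1
    · rw [← h1]; exact hmono hx (by norm_num) hx.2
  have hthirdval : c (1/3) = 1/2 := by
    have := hA 1 (by norm_num)
    rw [h1] at this; norm_num at this; exact this
  have htwothirdval : c (2/3) = 1/2 := by
    have := hB 0 (by norm_num)
    rw [h0] at this; norm_num at this; exact this
  have hmid : ∀ x ∈ Set.Icc (0:ℝ) 1, 1/3 ≤ x → x ≤ 2/3 → c x = 1/2 := by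
    intro x hx hx1 hx2
    have l1 : c (1/3) ≤ c x := hmono (by norm_num) hx hx1
    have l2 : c x ≤ c (2/3) := hmono hx (by norm_num) hx2
    rw [hthirdval] at l1; rw [htwothirdval] at l2; linarith
  have hAx : ∀ x : ℝ, 0 ≤ x → x ≤ 1/3 → c x = c (3*x) / 2 := by
    intro x hx0 hx1
    have := hA (3*x) ⟨by linarith, by linarith⟩
    rwa [show 3*x/3 = x by ring] at this
  have hBx : ∀ x : ℝ, 2/3 ≤ x → x ≤ 1 → c x = (1 + c (3*x - 2)) / 2 := by
    intro x hx0 hx1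
    have := hB (3*x - 2) ⟨by linarith, by linarith⟩
    rwa [show (3*x - 2 + 2)/3 = x by ring] at this
  intro n
  induction n with
  | zero =>
    intro x hx y hy hyx
    have hr : 0 ≤ (x - y) ^ cantorAlpha := Real.rpow_nonneg (by linarith) _
    have := (hbound x hx).2; have := (hbound y hy).1
    norm_num; linarith
  | succ n IH =>
    intro x hx y hy hyx
    have hxy0 : (0:ℝ) ≤ x - y := by linarith
    have hsc := scale_rpow hxy0
    have hps : ((1:ℝ)/2) ^ (n+1) = (1/2)^n * (1/2) := pow_succ _ _
    have hpn : (0:ℝ) < (1/2) ^ (n+1) := by positivity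
    rcases le_or_gt x (1/3) with hx3 | hx3
    · -- both in [0, 1/3]
      have e1 := hAx x hx.1 hx3
      have e2 := hAx y hy.1 (le_trans hyx hx3)
      have ih := IH (3*x) ⟨by linarith [hx.1], by linarith⟩
        (3*y) ⟨by linarith [hy.1], by linarith [le_trans hyx hx3]⟩ (by linarith)
      rw [show 3*x - 3*y = 3*(x-y) by ring] at ih
      rw [e1, e2]
      linarith
    rcases le_or_gt (2/3) y with hy3 | hy3
    · -- both in [2/3, 1]
      have e1 := hBx x (le_trans hy3 hyx) hx.2
      have e2 := hBx y hy3 hy.2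
      have ih := IH (3*x-2) ⟨by linarith [le_trans hy3 hyx], by linarith [hx.2]⟩
        (3*y-2) ⟨by linarith, by linarith [hy.2]⟩ (by linarith)
      rw [show (3*x-2) - (3*y-2) = 3*(x-y) by ring] at ih
      rw [e1, e2]
      linarith
    rcases le_or_gt x (2/3) with hx23 | hx23
    · -- x in [1/3, 2/3]
      have ecx : c x = 1/2 := hmid x hx hx3.le hx23
      rcases le_or_gt (1/3) y with hy13 | hy13
      · have ecy : c y = 1/2 := hmid y hy hy13 hy3.le
        have : (0:ℝ) ≤ (x-y) ^ cantorAlpha := Real.rpow_nonneg hxy0 _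
        rw [ecx, ecy]
        linarith
      · have e2 := hAx y hy.1 hy13.le
        have ih := IH 1 (by norm_num) (3*y) ⟨by linarith [hy.1], by linarith⟩
          (by linarith)
        rw [h1, show (1:ℝ) - 3*y = 3*(1/3-y) by ring] at ih
        have hsc2 := scale_rpow (show (0:ℝ) ≤ 1/3 - y by linarith)
        have hle : (1/3 - y) ^ cantorAlpha ≤ (x - y) ^ cantorAlpha :=
          Real.rpow_le_rpow (by linarith) (by linarith) cA_pos.le
        rw [ecx, e2]
        linarith
    · -- x in (2/3, 1]
      rcases le_or_gt (1/3) y with hy13 | hy13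
      · have ecy : c y = 1/2 := hmid y hy hy13 hy3.le
        have e1 := hBx x hx23.le hx.2
        have ih := IH (3*x-2) ⟨by linarith, by linarith [hx.2]⟩ 0 (by norm_num)
          (by linarith)
        rw [h0, show (3*x-2) - 0 = 3*(x-2/3) by ring] at ih
        have hsc2 := scale_rpow (show (0:ℝ) ≤ x - 2/3 by linarith)
        have hle : (x - 2/3) ^ cantorAlpha ≤ (x - y) ^ cantorAlpha :=
          Real.rpow_le_rpow (by linarith) (by linarith) cA_pos.le
        rw [e1, ecy]
        linarith
      · -- y in [0, 1/3), x in (2/3, 1]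
        have e1 := hBx x hx23.le hx.2
        have e2 := hAx y hy.1 hy13.le
        have hu : (3*x-2) ∈ Set.Icc (0:ℝ) 1 := ⟨by linarith, by linarith [hx.2]⟩
        have hv : (3*y) ∈ Set.Icc (0:ℝ) 1 := ⟨by linarith [hy.1], by linarith⟩
        rcases le_or_gt (3*y) (3*x-2) with huv | huv
        · have ih := IH (3*x-2) hu (3*y) hv huv
          have hk := key_ineq (t := (3*x-2) - 3*y)
            ⟨by linarith, by linarith [hx.2, hy.1]⟩
          rw [show ((3*x-2) - 3*y) + 2 = 3*(x-y) by ring] at hk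
          rw [e1, e2]
          linarith
        · have hcc : c (3*x-2) ≤ c (3*y) := hmono hu hv huv.le
          have hle : ((1:ℝ)/3) ^ cantorAlpha ≤ (x - y) ^ cantorAlpha :=
            Real.rpow_le_rpow (by norm_num) (by linarith) cA_pos.le
          rw [third_rpow] at hle
          rw [e1, e2]
          linarith

lemma sorting {g : ℝ → ℝ} (hg : MonotoneOn g (Set.Icc 0 1)) {a : ℝ} (ha : 0 ≤ a) :
    ∀ s : Finset ℕ, ∀ b : ℝ, a ≤ b → b ≤ 1 → ∀ x y : ℕ → ℝ,
    (∀ i ∈ s, x i ≤ y i ∧ (x i < y i → a ≤ x i ∧ y i ≤ b)) →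
    (∀ i ∈ s, ∀ j ∈ s, i ≠ j → Disjoint (Set.Ioo (x i) (y i)) (Set.Ioo (x j) (y j))) →
    ∑ i ∈ s, (g (y i) - g (x i)) ≤ g b - g a := by
  intro s
  induction s using Finset.strongInduction with
  | _ s IH =>
    intro b hab hb1 x y hxy hdisj
    by_cases hne : (s.filter fun i => x i < y i).Nonempty
    · obtain ⟨m, hm, hmax⟩ := Finset.exists_max_image _ y hne
      rw [Finset.mem_filter] at hm
      obtain ⟨hms, hmlt⟩ := hm
      have hax : a ≤ x m := ((hxy m hms).2 hmlt).1
      have hyb : y m ≤ b := ((hxy m hms).2 hmlt).2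
      have hrec : ∀ i ∈ s.erase m, x i ≤ y i ∧ (x i < y i → a ≤ x i ∧ y i ≤ x m) := by
        intro i hi
        rw [Finset.mem_erase] at hi
        obtain ⟨him, his⟩ := hi
        refine ⟨(hxy i his).1, fun hlt => ⟨((hxy i his).2 hlt).1, ?_⟩⟩
        have hyi : y i ≤ y m := hmax i (Finset.mem_filter.2 ⟨his, hlt⟩)
        by_contra hcon
        push_neg at hcon
        have hd := hdisj i his m hms him
        have hmax' : max (x i) (x m) < y i := max_lt hlt hcon
        refine absurd hd (Set.not_disjoint_iff.2 ⟨(max (x i) (x m) + y i)/2, ⟨?_, ?_⟩, ⟨?_, ?_⟩⟩)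
        · have := le_max_left (x i) (x m); linarith
        · linarith
        · have := le_max_right (x i) (x m); linarith
        · linarith
      have hx1 : x m ≤ 1 := le_trans hmlt.le (le_trans hyb hb1)
      have hsum := IH (s.erase m) (Finset.erase_ssubset hms) (x m) hax hx1 x y hrec
        (fun i hi j hj hij =>
          hdisj i (Finset.mem_of_mem_erase hi) j (Finset.mem_of_mem_erase hj) hij)
      have hstep : g (y m) ≤ g b :=
        hg ⟨le_trans ha (le_trans hax hmlt.le), le_trans hyb hb1⟩
          ⟨le_trans ha hab, hb1⟩ hyb
      have hsplit : ∑ i ∈ s, (g (y i) - g (x i))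
          = ∑ i ∈ s.erase m, (g (y i) - g (x i)) + (g (y m) - g (x m)) :=
        (Finset.sum_erase_add s (fun i => g (y i) - g (x i)) hms).symm
      rw [hsplit]
      linarith
    · have : ∑ i ∈ s, (g (y i) - g (x i)) = 0 := by
        apply Finset.sum_eq_zero
        intro i hi
        have h1 := (hxy i hi).1
        rcases eq_or_lt_of_le h1 with he | hlt
        · rw [he]; ring
        · exact absurd ⟨hi, hlt⟩ (fun h => hne ⟨i, Finset.mem_filter.2 h⟩)
      rw [this]
      have := hg ⟨ha, le_trans hab hb1⟩ ⟨le_trans ha hab, hb1⟩ hab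
      linarith

lemma lip_aux {u v η : ℝ} (hη : 0 < η) (hu : η ≤ u) (huv : u ≤ v) (hv : v ≤ 1) :
    v ^ cantorAlpha - u ^ cantorAlpha ≤ (v - u) / η := by
  have hu0 : 0 < u := lt_of_lt_of_le hη hu
  have hv0 : 0 < v := lt_of_lt_of_le hu0 huv
  have hdiv : (1:ℝ) ≤ v / u := (one_le_div hu0).2 huv
  have hB1 : (v/u) ^ cantorAlpha ≤ v / u := by
    have := Real.rpow_le_rpow_of_exponent_le hdiv cA_lt_one.le
    rwa [Real.rpow_one] at this
  have hB0 : (1:ℝ) ≤ (v/u) ^ cantorAlpha := Real.one_le_rpow hdiv cA_pos.le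
  have hA1 : u ^ cantorAlpha ≤ 1 := Real.rpow_le_one hu0.le (le_trans huv hv) cA_pos.le
  have hA0 : 0 ≤ u ^ cantorAlpha := Real.rpow_nonneg hu0.le _
  have hAB : u ^ cantorAlpha * (v/u) ^ cantorAlpha = v ^ cantorAlpha := by
    rw [← Real.mul_rpow hu0.le (by positivity)]
    rw [mul_div_cancel₀ _ hu0.ne']
  have h1 : v ^ cantorAlpha - u ^ cantorAlpha ≤ (v - u) / u := by
    rw [← hAB]
    have : (v - u)/u = v/u - 1 := by field_simp
    rw [this]
    nlinarith
  have h2 : (v - u) / u ≤ (v - u) / η :=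
    div_le_div_of_nonneg_left (by linarith) hη hu
  linarith

lemma g_mono : MonotoneOn (fun t : ℝ => t ^ cantorAlpha) (Set.Icc 0 1) :=
  fun _ ha _ _ hab => Real.rpow_le_rpow ha.1 hab cA_pos.le

theorem stmt8 (c : ℝ → ℝ) (hc : IsCantorFunction c) :
    (∀ x ∈ Set.Icc (0:ℝ) 1, c x ≤ x ^ (Real.log 2 / Real.log 3)) ∧
    (∀ x ∈ Set.Icc (0:ℝ) 1, ∀ y ∈ Set.Icc (0:ℝ) 1,
      |c x - c y| ≤ |x - y| ^ (Real.log 2 / Real.log 3)) ∧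
    AbsolutelyContinuousOn (fun x : ℝ => x ^ (Real.log 2 / Real.log 3)) 0 1 := by
  have hmono := hc.1
  have h0 := hc.2.1
  have main : ∀ x ∈ Set.Icc (0:ℝ) 1, ∀ y ∈ Set.Icc (0:ℝ) 1, y ≤ x →
      c x - c y ≤ (x - y) ^ cantorAlpha := by
    intro x hx y hy hyx
    by_contra h
    push_neg at h
    obtain ⟨n, hn⟩ := exists_pow_lt_of_lt_one
      (show (0:ℝ) < c x - c y - (x-y)^cantorAlpha by linarith)
      (show (1:ℝ)/2 < 1 by norm_num)
    have := holder_aux hc n x hx y hy hyx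
    linarith
  have part2 : ∀ x ∈ Set.Icc (0:ℝ) 1, ∀ y ∈ Set.Icc (0:ℝ) 1,
      |c x - c y| ≤ |x - y| ^ cantorAlpha := by
    intro x hx y hy
    rcases le_total y x with h | h
    · have hcm : c y ≤ c x := hmono hy hx h
      rw [abs_of_nonneg (by linarith), abs_of_nonneg (by linarith)]
      exact main x hx y hy h
    · have hcm : c x ≤ c y := hmono hx hy h
      rw [abs_of_nonpos (by linarith), abs_of_nonpos (by linarith), neg_sub, neg_sub]
      exact main y hy x hx h
  refine ⟨?_, part2, ?_⟩
  · intro x hx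
    have := part2 x hx 0 (by norm_num)
    rw [h0, sub_zero, sub_zero, abs_of_nonneg hx.1] at this
    exact le_trans (le_abs_self _) this
  · -- absolute continuity of t ^ α
    intro ε hε
    set α := Real.log 2 / Real.log 3 with hαdef
    have hαc : α = cantorAlpha := rfl
    set η : ℝ := min 1 ((ε/4) ^ α⁻¹) with hηdef
    have hε4 : (0:ℝ) < ε/4 := by linarith
    have hη0 : 0 < η := lt_min one_pos (Real.rpow_pos_of_pos hε4 _)
    have hη1 : η ≤ 1 := min_le_left _ _
    have hηα : η ^ α ≤ ε/4 := by
      have h1 : η ^ α ≤ ((ε/4) ^ α⁻¹) ^ α :=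
        Real.rpow_le_rpow hη0.le (min_le_right _ _) (hαc ▸ cA_pos.le)
      rwa [← Real.rpow_mul hε4.le, inv_mul_cancel₀ (hαc ▸ cA_pos.ne'),
        Real.rpow_one] at h1
    refine ⟨η * (ε/4), by positivity, ?_⟩
    intro n x y hin hdis hsum
    set xl : ℕ → ℝ := fun i => min (x i) η with hxl
    set yl : ℕ → ℝ := fun i => min (y i) η with hyl
    set xr : ℕ → ℝ := fun i => max (x i) η with hxr
    set yr : ℕ → ℝ := fun i => max (y i) η with hyr
    have hsplit : ∀ i < n, |(fun t : ℝ => t ^ α) (y i) - (fun t : ℝ => t ^ α) (x i)|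
        = ((yl i) ^ α - (xl i) ^ α) + ((yr i) ^ α - (xr i) ^ α) := by
      intro i hi
      obtain ⟨h1, h2, h3⟩ := hin i hi
      have habs : |(y i) ^ α - (x i) ^ α| = (y i) ^ α - (x i) ^ α := by
        rw [abs_of_nonneg]
        have := Real.rpow_le_rpow (by linarith) h2 (hαc ▸ cA_pos.le)
        linarith
      show |(y i) ^ α - (x i) ^ α| = _
      rw [habs]
      rcases le_total (y i) η with h | h
      · have e1 : yl i = y i := min_eq_left h
        have e2 : xl i = x i := min_eq_left (le_trans h2 h)
        have e3 : yr i = η := max_eq_right h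
        have e4 : xr i = η := max_eq_right (le_trans h2 h)
        rw [e1, e2, e3, e4]; ring
      · rcases le_total (x i) η with h' | h'
        · have e1 : yl i = η := min_eq_right h
          have e2 : xl i = x i := min_eq_left h'
          have e3 : yr i = y i := max_eq_left h
          have e4 : xr i = η := max_eq_right h'
          rw [e1, e2, e3, e4]; ring
        · have e1 : yl i = η := min_eq_right h
          have e2 : xl i = η := min_eq_right h'
          have e3 : yr i = y i := max_eq_left h
          have e4 : xr i = x i := max_eq_left h'
          rw [e1, e2, e3, e4]; ring
    rw [Finset.sum_congr rfl (fun i hi => hsplit i (Finset.mem_range.1 hi)),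
      Finset.sum_add_distrib]
    have hsub : ∀ k, Set.Ioo (xl k) (yl k) ⊆ Set.Ioo (x k) (y k) := by
      intro k t ht
      obtain ⟨ht1, ht2⟩ := ht
      have htη : t < η := lt_of_lt_of_le ht2 (min_le_right _ _)
      refine ⟨?_, lt_of_lt_of_le ht2 (min_le_left _ _)⟩
      rcases le_total (x k) η with h | h
      · rwa [show xl k = x k from min_eq_left h] at ht1
      · rw [show xl k = η from min_eq_right h] at ht1; linarith
    have hhyp : ∀ i ∈ Finset.range n, xl i ≤ yl i ∧
        (xl i < yl i → (0:ℝ) ≤ xl i ∧ yl i ≤ η) := by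
      intro i hi
      obtain ⟨h1, h2, h3⟩ := hin i (Finset.mem_range.1 hi)
      exact ⟨min_le_min_right _ h2, fun _ => ⟨le_min h1 hη0.le, min_le_right _ _⟩⟩
    have hdisj' : ∀ i ∈ Finset.range n, ∀ j ∈ Finset.range n, i ≠ j →
        Disjoint (Set.Ioo (xl i) (yl i)) (Set.Ioo (xl j) (yl j)) := by
      intro i hi j hj hij
      exact (hdis i (Finset.mem_range.1 hi) j (Finset.mem_range.1 hj) hij).mono
        (hsub i) (hsub j)
    have boundA : ∑ i ∈ Finset.range n, ((yl i) ^ α - (xl i) ^ α) ≤ η ^ α := by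
      have hs := sorting g_mono (le_refl (0:ℝ)) (Finset.range n) η hη0.le hη1
        xl yl hhyp hdisj'
      rw [Real.zero_rpow (hαc ▸ cA_pos.ne'), sub_zero] at hs
      exact hs
    have boundB : ∑ i ∈ Finset.range n, ((yr i) ^ α - (xr i) ^ α)
        ≤ (∑ i ∈ Finset.range n, (y i - x i)) / η := by
      rw [Finset.sum_div]
      apply Finset.sum_le_sum
      intro i hi
      obtain ⟨h1, h2, h3⟩ := hin i (Finset.mem_range.1 hi)
      have hterm : (yr i) ^ α - (xr i) ^ α ≤ (yr i - xr i) / η := by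
        rw [hαc]
        exact lip_aux hη0 (le_max_right _ _) (max_le_max_right _ h2)
          (max_le h3 hη1)
      have hdiff : yr i - xr i ≤ y i - x i := by
        rcases le_total (y i) η with h | h
        · have e3 : yr i = η := max_eq_right h
          have e4 : xr i = η := max_eq_right (le_trans h2 h)
          rw [e3, e4]; linarith
        · rcases le_total (x i) η with h' | h'
          · have e3 : yr i = y i := max_eq_left h
            have e4 : xr i = η := max_eq_right h'
            rw [e3, e4]; linarith
          · have e3 : yr i = y i := max_eq_left h
            have e4 : xr i = x i := max_eq_left h'
            rw [e3, e4]
      calc (yr i) ^ α - (xr i) ^ α ≤ (yr i - xr i) / η := hterm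
        _ ≤ (y i - x i) / η := by gcongr
    have hsum' : (∑ i ∈ Finset.range n, (y i - x i)) / η < ε/4 := by
      rw [div_lt_iff₀ hη0]
      calc _ < η * (ε/4) := hsum
        _ = ε/4 * η := by ring
    linarith
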